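/- arXiv:1306.5696 — 2 statements merged into one kernel-verified Lean document; each statement's English description precedes it below -/
import Mathlib

section
/- For the elementary Nielsen automorphism φ (a ↦ ab, fixing b and all c_j) and any reduced word w such that w·a⁻¹ is reduced, the image of the cylinder C¹_{w·a⁻¹} under the boundary extension of φ equals the cylinder C¹_{reduce(φ(w)b⁻¹a⁻¹)}, where the subscript word is the reduced form of φ(w)b⁻¹a⁻¹ (in which b⁻¹a⁻¹ is appended without cancellation against φ(w)b⁻¹). -/
open FreeGroup

variable {α : Type*}

/-- Inverse of a letter `(x, b)` in the alphabet `A ∪ A⁻¹`. -/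
def linv (x : α × Bool) : α × Bool := (x.1, !x.2)

/-- The boundary `∂F(A)`: infinite reduced words over `A ∪ A⁻¹`. -/
def Bd (α : Type*) : Type _ := {ξ : ℕ → α × Bool // ∀ n, ξ (n + 1) ≠ linv (ξ n)}

/-- The cylinder `C¹_w` of all infinite reduced words with prefix `w`. -/
def Cyl (w : List (α × Bool)) : Set (Bd α) :=
  {ξ | ∀ i, (h : i < w.length) → ξ.1 i = w.get ⟨i, h⟩}

/-- The length-`m` prefix of an infinite reduced word. -/
def pre (ξ : Bd α) (m : ℕ) : List (α × Bool) := List.ofFn (fun i : Fin m => ξ.1 i)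

/-- `Φ` is the boundary extension of the automorphism `φ`:
for every `ξ ∈ ∂F(A)`, the reduced words `φ(ξ|_m)` converge to `Φ ξ`. -/
def ExtendsBd [DecidableEq α] (φ : FreeGroup α ≃* FreeGroup α) (Φ : Bd α → Bd α) : Prop :=
  ∀ ξ : Bd α, ∀ k : ℕ, ∃ n : ℕ, ∀ m, n ≤ m →
    ((φ (FreeGroup.mk (pre ξ m))).toWord).take k = List.ofFn (fun i : Fin k => (Φ ξ).1 i)

/-- `Concat g ξ η` : `η` is the reduced concatenation `g · ξ` (left translation of a
boundary point by a group element): some terminal segment of (the reduced word of) `g`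
cancels against an initial segment of `ξ`, and `η` is the concatenation of the rest. -/
def Concat [DecidableEq α] (g : FreeGroup α) (ξ η : Bd α) : Prop :=
  ∃ ℓ : ℕ, ∃ hℓ : ℓ ≤ g.toWord.length,
    (∀ i, (h : i < ℓ) → ξ.1 i = linv (g.toWord.get ⟨g.toWord.length - 1 - i, by omega⟩)) ∧
    (∀ n : ℕ, η.1 n =
      if h : n < g.toWord.length - ℓ then g.toWord.get ⟨n, by omega⟩
      else ξ.1 (n - (g.toWord.length - ℓ) + ℓ))

/-- The vertex `g` of the Cayley tree lies on the bi-infinite geodesic from `ξ` to `η`. -/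
def OnGeod [DecidableEq α] (g : FreeGroup α) (ξ η : Bd α) : Prop :=
  ∃ ξ' η' : Bd α, Concat g⁻¹ ξ ξ' ∧ Concat g⁻¹ η η' ∧ ξ'.1 0 ≠ η'.1 0

/-- The double cylinder `C²_{[v,w]}`. -/
def DblCyl [DecidableEq α] (v w : FreeGroup α) : Set (Bd α × Bd α) :=
  {p | p.1 ≠ p.2 ∧ OnGeod v p.1 p.2 ∧ OnGeod w p.1 p.2}

/-- Letter-permuting automorphism: every generator maps to a single letter. -/
def IsPermAut [DecidableEq α] (φ : FreeGroup α ≃* FreeGroup α) : Prop :=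
  ∀ x : α, ((φ (FreeGroup.of x)).toWord).length = 1

/-- Elementary Nielsen automorphism: `a ↦ ab`, all other generators fixed. -/
def IsNielsenAut (φ : FreeGroup α ≃* FreeGroup α) : Prop :=
  ∃ a b : α, a ≠ b ∧ φ (FreeGroup.of a) = FreeGroup.of a * FreeGroup.of b ∧
    ∀ x : α, x ≠ a → φ (FreeGroup.of x) = FreeGroup.of x
/-!
Write `φₜ` for `a ↦ a bᵗ` (`t = ±1`), so that `φ = φ₁` and `φ⁻¹ = φ₋₁`. On a reduced word, `φₜ`
cancels only inside the pairs `a b⁻ᵗ` and `bᵗ a⁻¹`, so the reduced image of a word is computed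
letter by letter with one letter of lookahead (`Nielsen.nielsenWord`). Hence appending letters to
`u` changes at most the last two letters of its image, which has length at least `|u| / 2`; this
is what makes `φₜ` extend to the boundary. Moreover a final letter `a⁻¹` is a barrier: the image of
`u v` is the image of `u` followed by that of `v` when `u` ends in `a⁻¹`. The barrier gives
`Φ(C¹_{w a⁻¹}) ⊆ C¹_{φ(w a⁻¹)}`, and since `φ(w a⁻¹) = φ(w) b⁻¹ a⁻¹` again ends in `a⁻¹`, the
boundary extension of `φ₋₁`, which inverts `Φ`, gives the reverse inclusion.
-/

theorem ne_linv_iff {x y : α × Bool} : y ≠ linv x ↔ (x.1 = y.1 → x.2 = y.2) := by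
  obtain ⟨x₁, x₂⟩ := x
  obtain ⟨y₁, y₂⟩ := y
  cases x₂ <;> cases y₂ <;> simp [linv, eq_comm]

theorem pre_length (ξ : Bd α) (m : ℕ) : (pre ξ m).length = m := List.length_ofFn

theorem pre_take (ξ : Bd α) {k m : ℕ} (h : k ≤ m) : (pre ξ m).take k = pre ξ k :=
  List.ext_getElem (by simp [pre_length, h]) fun _ _ _ => by simp [pre]

theorem isReduced_pre (ξ : Bd α) (m : ℕ) : IsReduced (pre ξ m) :=
  List.isChain_ofFn.2 fun i _ => ne_linv_iff.1 (ξ.2 i)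

theorem mem_cyl_iff_pre {ξ : Bd α} {u : List (α × Bool)} : ξ ∈ Cyl u ↔ pre ξ u.length = u := by
  simp [Cyl, List.ext_get_iff, pre]

theorem exists_pre_eq_append {ξ : Bd α} {u : List (α × Bool)} (hξ : ξ ∈ Cyl u) {m : ℕ}
    (hm : u.length ≤ m) : ∃ v, pre ξ m = u ++ v :=
  ⟨_, by rw [← mem_cyl_iff_pre.1 hξ, ← pre_take ξ hm, List.take_append_drop]⟩

theorem Bd.ext_of_pre {ξ η : Bd α} (h : ∀ k, pre ξ k = pre η k) : ξ = η := by
  refine Subtype.ext (funext fun n => ?_)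
  simpa using congrFun (List.ofFn_inj.1 (h (n + 1))) (Fin.last n)

namespace Nielsen

open List

variable [DecidableEq α] {a b : α} {t : Bool}

def letterImage (a b : α) (t : Bool) (x : α × Bool) : List (α × Bool) :=
  if x = (a, true) then [(a, true), (b, t)]
  else if x = (a, false) then [(b, !t), (a, false)]
  else [x]

theorem letterImage_self_true : letterImage a b t (a, true) = [(a, true), (b, t)] := if_pos rfl

theorem letterImage_self_false : letterImage a b t (a, false) = [(b, !t), (a, false)] := by
  simp [letterImage]

theorem letterImage_of_fst_ne {x : α × Bool} (h : x.1 ≠ a) : letterImage a b t x = [x] := by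
  simp [letterImage, Prod.ext_iff, h]

theorem one_le_length_letterImage (x : α × Bool) : 1 ≤ (letterImage a b t x).length := by
  unfold letterImage; split_ifs <;> simp

theorem length_letterImage_le_two (x : α × Bool) : (letterImage a b t x).length ≤ 2 := by
  unfold letterImage; split_ifs <;> simp

theorem getLast?_letterImage (x : α × Bool) :
    (letterImage a b t x).getLast? = some (if x = (a, true) then (b, t) else x) := by
  unfold letterImage; split_ifs <;> simp_all

theorem isReduced_letterImage (hab : a ≠ b) (x : α × Bool) : IsReduced (letterImage a b t x) := by
  unfold letterImage; split_ifs <;> simp [hab, hab.symm]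

/-- `nielsenHom a b true` is `a ↦ a b`, and `nielsenHom a b false` is its inverse `a ↦ a b⁻¹`. -/
def nielsenHom (a b : α) (t : Bool) : FreeGroup α →* FreeGroup α :=
  FreeGroup.lift fun x => FreeGroup.mk (letterImage a b t (x, true))

theorem nielsenHom_of (x : α) :
    nielsenHom a b t (FreeGroup.of x) = FreeGroup.mk (letterImage a b t (x, true)) :=
  lift_apply_of

theorem letterImage_false (x : α) :
    letterImage a b t (x, false) = invRev (letterImage a b t (x, true)) := by
  by_cases hx : x = a
  · subst hx; simp [letterImage, invRev]
  · simp [letterImage_of_fst_ne (x := (x, false)) hx, letterImage_of_fst_ne (x := (x, true)) hx,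
      invRev]

theorem nielsenHom_mk (u : List (α × Bool)) :
    nielsenHom a b t (FreeGroup.mk u) = FreeGroup.mk (u.flatMap (letterImage a b t)) := by
  induction u with
  | nil => exact _root_.map_one _
  | cons x u ih =>
    rw [flatMap_cons, ← mul_mk, ← singleton_append, ← mul_mk, _root_.map_mul, ih]
    congr 1
    obtain ⟨x, _ | _⟩ := x
    · rw [letterImage_false, ← inv_mk, ← nielsenHom_of, ← _root_.map_inv]
      rfl
    · exact nielsenHom_of x

theorem nielsenHom_comp_nielsenHom_not (hab : a ≠ b) (t : Bool) :
    (nielsenHom a b t).comp (nielsenHom a b !t) = MonoidHom.id _ := by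
  refine FreeGroup.ext_hom _ _ fun x => ?_
  rw [MonoidHom.comp_apply, nielsenHom_of, nielsenHom_mk]
  by_cases hx : x = a
  · subst hx
    rw [letterImage_self_true, flatMap_cons, flatMap_singleton, letterImage_self_true,
      letterImage_of_fst_ne (x := (b, !t)) hab.symm]
    exact Quot.sound (Red.Step.not (L₁ := [(x, true)]) (L₂ := []))
  · simp [letterImage_of_fst_ne (x := (x, true)) hx]
    rfl

def nielsen (hab : a ≠ b) (t : Bool) : FreeGroup α ≃* FreeGroup α :=
  (nielsenHom a b t).toMulEquiv (nielsenHom a b !t)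
    (by simpa using nielsenHom_comp_nielsenHom_not hab !t) (nielsenHom_comp_nielsenHom_not hab t)

theorem nielsen_nielsen_not (hab : a ≠ b) (g : FreeGroup α) :
    nielsen hab t (nielsen hab (!t) g) = g :=
  DFunLike.congr_fun (nielsenHom_comp_nielsenHom_not hab t) g

theorem eq_nielsen_true (hab : a ≠ b) {φ : FreeGroup α ≃* FreeGroup α}
    (hφa : φ (FreeGroup.of a) = FreeGroup.of a * FreeGroup.of b)
    (hφ : ∀ x : α, x ≠ a → φ (FreeGroup.of x) = FreeGroup.of x) :
    φ = nielsen hab true := by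
  refine MulEquiv.toMonoidHom_injective (FreeGroup.ext_hom _ _ fun x => ?_)
  change φ (of x) = nielsenHom a b true (of x)
  rw [nielsenHom_of]
  by_cases hx : x = a
  · subst hx; rw [hφa, letterImage_self_true]; rfl
  · rw [hφ x hx, letterImage_of_fst_ne (x := (x, true)) hx]; rfl

def nielsenWord (a b : α) (t : Bool) : List (α × Bool) → List (α × Bool)
  | [] => []
  | [x] => letterImage a b t x
  | x :: y :: tl =>
    if x = (a, true) ∧ y = (b, !t) then (a, true) :: nielsenWord a b t tl
    else if x = (b, t) ∧ y = (a, false) then (a, false) :: nielsenWord a b t tl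
    else letterImage a b t x ++ nielsenWord a b t (y :: tl)

theorem length_nielsenWord (u : List (α × Bool)) :
    (u.length + 1) / 2 ≤ (nielsenWord a b t u).length := by
  fun_induction nielsenWord a b t u with
  | case2 x | case5 x =>
    have := one_le_length_letterImage (a := a) (b := b) (t := t) x
    simp only [length_cons, length_append, length_nil] at *; omega
  | _ => simp only [length_cons, length_nil] at *; omega

theorem take_nielsenWord_append_of_add_two_le {u : List (α × Bool)} (v : List (α × Bool)) {k : ℕ}
    (hk : k + 2 ≤ (nielsenWord a b t u).length) :
    (nielsenWord a b t (u ++ v)).take k = (nielsenWord a b t u).take k := by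
  fun_induction nielsenWord a b t u generalizing k with
  | case1 => simp at hk
  | case2 x =>
    have := length_letterImage_le_two (a := a) (b := b) (t := t) x
    obtain rfl : k = 0 := by omega
    simp
  | case3 x y tl h ih | case4 x y tl _ h ih =>
    rw [cons_append, cons_append, nielsenWord]
    rcases k with _ | k
    · simp
    · simp only [length_cons] at hk
      split_ifs
      rw [take_succ_cons, take_succ_cons, ih (by omega)]
  | case5 x y tl h₁ h₂ ih =>
    rw [cons_append, cons_append, nielsenWord, if_neg h₁, if_neg h₂, ← cons_append,
      take_append, take_append]
    rcases Nat.le_total k (letterImage a b t x).length with hle | hle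
    · simp [Nat.sub_eq_zero_of_le hle]
    · rw [length_append] at hk
      rw [ih (by omega)]

theorem nielsenWord_append_of_getLast? (hab : a ≠ b) {u : List (α × Bool)}
    (hu : u.getLast? = some (a, false)) (v : List (α × Bool)) :
    nielsenWord a b t (u ++ v) = nielsenWord a b t u ++ nielsenWord a b t v := by
  fun_induction nielsenWord a b t u with
  | case1 => simp at hu
  | case2 x =>
    obtain rfl : x = (a, false) := by simpa using hu
    cases v with
    | nil => simp [nielsenWord]
    | cons z v => rw [singleton_append, nielsenWord, if_neg (by simp), if_neg (by simp [hab])]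
  | case3 x y tl hxy ih | case4 x y tl _ hxy ih =>
    rw [cons_append, cons_append, nielsenWord]
    split_ifs
    cases tl with
    | nil => simp_all [nielsenWord]
    | cons c tl => rw [getLast?_cons_cons, getLast?_cons_cons] at hu; rw [ih hu]; rfl
  | case5 x y tl h₁ h₂ ih =>
    rw [getLast?_cons_cons] at hu
    rw [cons_append, cons_append, nielsenWord, if_neg h₁, if_neg h₂, ← cons_append, ih hu,
      append_assoc]

theorem getLast?_nielsenWord (hab : a ≠ b) {u : List (α × Bool)}
    (hu : u.getLast? = some (a, false)) : (nielsenWord a b t u).getLast? = some (a, false) := by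
  fun_induction nielsenWord a b t u with
  | case1 => simp at hu
  | case2 x =>
    obtain rfl : x = (a, false) := by simpa using hu
    simp [letterImage]
  | case3 x y tl hxy ih | case4 x y tl _ hxy ih =>
    cases tl with
    | nil => simp_all [nielsenWord]
    | cons c tl => rw [getLast?_cons_cons, getLast?_cons_cons] at hu; rw [getLast?_cons, ih hu]; rfl
  | case5 x y tl h₁ h₂ ih =>
    rw [getLast?_cons_cons] at hu
    rw [getLast?_append, ih hu]
    rfl

theorem head?_nielsenWord_cons (x : α × Bool) (s : List (α × Bool)) :
    (x ≠ (a, false) ∧ (nielsenWord a b t (x :: s)).head? = some x) ∨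
    (x = (a, false) ∧ (nielsenWord a b t (x :: s)).head? = some (b, !t)) ∨
    (x = (b, t) ∧ (nielsenWord a b t (x :: s)).head? = some (a, false)) := by
  cases s <;> unfold nielsenWord letterImage <;> split_ifs <;> simp_all

theorem isReduced_nielsenWord (hab : a ≠ b) {u : List (α × Bool)} (hu : IsReduced u) :
    IsReduced (nielsenWord a b t u) := by
  fun_induction nielsenWord a b t u with
  | case1 => exact .nil
  | case2 x => exact isReduced_letterImage hab x
  | case3 x y tl hxy ih | case4 x y tl _ hxy ih =>
    rw [isReduced_cons_cons] at hu
    cases tl with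
    | nil => exact .singleton
    | cons c tl =>
      rw [isReduced_cons_cons] at hu
      refine isChain_cons.2 ⟨?_, ih hu.2.2⟩
      rcases head?_nielsenWord_cons (a := a) (b := b) (t := t) c tl with
        ⟨_, h⟩ | ⟨_, h⟩ | ⟨_, h⟩ <;> simp only [h, Option.mem_some_iff, forall_eq'] <;> grind
  | case5 x y tl h₁ h₂ ih =>
    rw [isReduced_cons_cons] at hu
    refine (isReduced_letterImage hab x).append (ih hu.2) ?_
    rw [getLast?_letterImage]
    obtain ⟨x1, x2⟩ := x
    obtain ⟨y1, y2⟩ := y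
    rcases head?_nielsenWord_cons (a := a) (b := b) (t := t) (y1, y2) tl with
      ⟨_, h⟩ | ⟨_, h⟩ | ⟨_, h⟩ <;> simp only [h, Option.mem_some_iff, forall_eq'] <;>
      cases x2 <;> cases y2 <;> cases t <;> grind

theorem mk_nielsenWord (hab : a ≠ b) (u : List (α × Bool)) :
    FreeGroup.mk (nielsenWord a b t u) = FreeGroup.mk (u.flatMap (letterImage a b t)) := by
  fun_induction nielsenWord a b t u with
  | case1 => rfl
  | case2 x => simp
  | case3 x y tl hxy ih =>
    obtain ⟨rfl, rfl⟩ := hxy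
    rw [flatMap_cons, flatMap_cons, letterImage_self_true,
      letterImage_of_fst_ne (x := (b, !t)) hab.symm, ← singleton_append, ← mul_mk, ih, mul_mk]
    exact (Quot.sound (Red.Step.not (L₁ := [(a, true)]))).symm
  | case4 x y tl _ hxy ih =>
    obtain ⟨rfl, rfl⟩ := hxy
    rw [flatMap_cons, flatMap_cons, letterImage_self_false,
      letterImage_of_fst_ne (x := (b, t)) hab.symm, ← singleton_append, ← mul_mk, ih, mul_mk]
    exact (Quot.sound (Red.Step.not (L₁ := []))).symm
  | case5 x y tl h₁ h₂ ih =>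
    rw [flatMap_cons, ← mul_mk, ← mul_mk, ih]

theorem take_nielsenWord_append {u : List (α × Bool)} (v : List (α × Bool)) {k : ℕ}
    (hk : 2 * k + 3 ≤ u.length) :
    (nielsenWord a b t (u ++ v)).take k = (nielsenWord a b t u).take k :=
  take_nielsenWord_append_of_add_two_le v
    (by have := length_nielsenWord (a := a) (b := b) (t := t) u; omega)

theorem toWord_nielsen_mk (hab : a ≠ b) {u : List (α × Bool)} (hu : IsReduced u) :
    (nielsen hab t (FreeGroup.mk u)).toWord = nielsenWord a b t u := by
  change (nielsenHom a b t (FreeGroup.mk u)).toWord = _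
  rw [nielsenHom_mk, ← mk_nielsenWord hab, toWord_mk, (isReduced_nielsenWord hab hu).reduce_eq]

theorem nielsenWord_nielsenWord_not (hab : a ≠ b) {u : List (α × Bool)} (hu : IsReduced u) :
    nielsenWord a b t (nielsenWord a b (!t) u) = u := by
  rw [← toWord_nielsen_mk hab hu, ← toWord_nielsen_mk hab isReduced_toWord, mk_toWord,
    nielsen_nielsen_not, toWord_mk, hu.reduce_eq]

theorem take_nielsenWord_pre (η : Bd α) {k m M : ℕ} (hk : 2 * k + 3 ≤ m) (hm : m ≤ M) :
    (nielsenWord a b t (pre η M)).take k = (nielsenWord a b t (pre η m)).take k := by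
  rw [← take_append_drop m (pre η M), pre_take η hm,
    take_nielsenWord_append _ (by rw [pre_length]; exact hk)]

/-- The default letter is never read: the image of `pre η (2 * n + 5)` has length at least
`n + 3`. -/
def limitLetter (a b : α) (t : Bool) (η : Bd α) (n : ℕ) : α × Bool :=
  (nielsenWord a b t (pre η (2 * n + 5))).getD n (a, true)

theorem ofFn_limitLetter (η : Bd α) {k m : ℕ} (hk : 2 * k + 3 ≤ m) :
    List.ofFn (fun i : Fin k => limitLetter a b t η i) = (nielsenWord a b t (pre η m)).take k := by
  have hlen := length_nielsenWord (a := a) (b := b) (t := t) (pre η m)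
  rw [pre_length] at hlen
  refine ext_getElem (by simp; omega) fun i hi _ => ?_
  simp only [length_ofFn] at hi
  have h := congrArg (·[i]?) (take_nielsenWord_pre (a := a) (b := b) (t := t) η
    (k := i + 1) (m := 2 * i + 5) (M := m) (by omega) (by omega))
  simp only [getElem?_take, Nat.lt_succ_self, if_true] at h
  rw [List.getElem_ofFn, getElem_take, limitLetter, getD_eq_getElem?_getD, ← h,
    getElem?_eq_getElem (by omega), Option.getD_some]

theorem isReduced_ofFn_limitLetter (hab : a ≠ b) (η : Bd α) (k : ℕ) :
    IsReduced (List.ofFn fun i : Fin k => limitLetter a b t η i) := by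
  rw [ofFn_limitLetter η le_rfl]
  exact (isReduced_nielsenWord hab (isReduced_pre η _)).infix (take_prefix _ _).isInfix

def bdMap (hab : a ≠ b) (t : Bool) (η : Bd α) : Bd α :=
  ⟨limitLetter a b t η, fun n =>
    ne_linv_iff.2 (isChain_ofFn.1 (isReduced_ofFn_limitLetter hab η (n + 2)) n (by omega))⟩

theorem pre_bdMap (hab : a ≠ b) (η : Bd α) {k m : ℕ} (hk : 2 * k + 3 ≤ m) :
    pre (bdMap hab t η) k = (nielsenWord a b t (pre η m)).take k :=
  ofFn_limitLetter η hk

theorem extendsBd_nielsen_iff (hab : a ≠ b) {Ψ : Bd α → Bd α} :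
    ExtendsBd (nielsen hab t) Ψ ↔
      ∀ ξ k, ∃ n, ∀ m, n ≤ m → (nielsenWord a b t (pre ξ m)).take k = pre (Ψ ξ) k := by
  simp only [ExtendsBd, toWord_nielsen_mk hab (isReduced_pre _ _)]
  rfl

theorem extendsBd_bdMap (hab : a ≠ b) : ExtendsBd (nielsen hab t) (bdMap hab t) :=
  (extendsBd_nielsen_iff hab).2 fun η k => ⟨2 * k + 3, fun _ hm => (pre_bdMap hab η hm).symm⟩

theorem ExtendsBd.mapsTo_cyl {hab : a ≠ b} {Ψ : Bd α → Bd α} (hΨ : ExtendsBd (nielsen hab t) Ψ)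
    {u : List (α × Bool)} (hu : u.getLast? = some (a, false)) :
    Set.MapsTo Ψ (Cyl u) (Cyl (nielsenWord a b t u)) := by
  intro ξ hξ
  obtain ⟨n, hn⟩ := (extendsBd_nielsen_iff hab).1 hΨ ξ (nielsenWord a b t u).length
  obtain ⟨v, hv⟩ := exists_pre_eq_append hξ (le_max_right n u.length)
  rw [mem_cyl_iff_pre, ← hn _ (le_max_left _ _), hv, nielsenWord_append_of_getLast? hab hu,
    take_left' rfl]

theorem ExtendsBd.apply_apply_eq {hab : a ≠ b} {Ψ Ψ' : Bd α → Bd α}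
    (hΨ : ExtendsBd (nielsen hab t) Ψ) (hΨ' : ExtendsBd (nielsen hab !t) Ψ') (η : Bd α) :
    Ψ (Ψ' η) = η := by
  refine Bd.ext_of_pre fun k => ?_
  obtain ⟨n, hn⟩ := (extendsBd_nielsen_iff hab).1 hΨ (Ψ' η) k
  set m := max n (2 * k + 3)
  obtain ⟨n', hn'⟩ := (extendsBd_nielsen_iff hab).1 hΨ' η m
  set M := max n' k
  set D := nielsenWord a b (!t) (pre η M)
  have hD : D.take m = pre (Ψ' η) m := hn' M (le_max_left _ _)
  calc pre (Ψ (Ψ' η)) k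
      = (nielsenWord a b t (pre (Ψ' η) m)).take k := (hn m (le_max_left _ _)).symm
    _ = (nielsenWord a b t (pre (Ψ' η) m ++ D.drop m)).take k :=
        (take_nielsenWord_append _ (by rw [pre_length]; omega)).symm
    _ = (nielsenWord a b t D).take k := by rw [← hD, take_append_drop]
    _ = (pre η M).take k := by rw [nielsenWord_nielsenWord_not hab (isReduced_pre η M)]
    _ = pre η k := pre_take η (le_max_right _ _)

end Nielsen

open Nielsen

theorem stmt9_general [DecidableEq α] (a b : α) (hab : a ≠ b)
    (φ : FreeGroup α ≃* FreeGroup α)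
    (hφa : φ (FreeGroup.of a) = FreeGroup.of a * FreeGroup.of b)
    (hφ : ∀ x : α, x ≠ a → φ (FreeGroup.of x) = FreeGroup.of x)
    (Φ : Bd α → Bd α) (hΦ : ExtendsBd φ Φ)
    (w : FreeGroup α)
    (hred : (w * (FreeGroup.of a)⁻¹).toWord = w.toWord ++ [(a, false)]) :
    Φ '' Cyl ((w * (FreeGroup.of a)⁻¹).toWord) =
      Cyl ((φ w * (FreeGroup.of b)⁻¹ * (FreeGroup.of a)⁻¹).toWord) := by
  set S := (w * (FreeGroup.of a)⁻¹).toWord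
  have hS : S.getLast? = some (a, false) := by rw [hred]; simp
  have hST : nielsenWord a b true S = (φ w * (FreeGroup.of b)⁻¹ * (FreeGroup.of a)⁻¹).toWord := by
    rw [← toWord_nielsen_mk hab isReduced_toWord, mk_toWord, ← eq_nielsen_true hab hφa hφ,
      _root_.map_mul, _root_.map_inv, hφa, mul_inv_rev, mul_assoc]
  rw [← hST]
  rw [eq_nielsen_true hab hφa hφ] at hΦ
  have hT := getLast?_nielsenWord (t := true) hab hS
  have hTS : nielsenWord a b false (nielsenWord a b true S) = S :=
    nielsenWord_nielsenWord_not hab isReduced_toWord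
  refine (hΦ.mapsTo_cyl hS).image_subset.antisymm fun η hη => ⟨bdMap hab false η, ?_, ?_⟩
  · exact hTS ▸ (extendsBd_bdMap hab).mapsTo_cyl hT hη
  · exact hΦ.apply_apply_eq (extendsBd_bdMap hab) η

/-- Nielsen automorphism `a ↦ ab`: `φ(C¹_{w·a⁻¹}) = C¹_{φ(w)b⁻¹·a⁻¹}`. -/
theorem stmt9 [DecidableEq α] [Nontrivial α] (a b : α) (hab : a ≠ b)
    (φ : FreeGroup α ≃* FreeGroup α)
    (hφa : φ (FreeGroup.of a) = FreeGroup.of a * FreeGroup.of b)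
    (hφ : ∀ x : α, x ≠ a → φ (FreeGroup.of x) = FreeGroup.of x)
    (Φ : Bd α → Bd α) (hΦ : ExtendsBd φ Φ)
    (w : FreeGroup α)
    (hred : (w * (FreeGroup.of a)⁻¹).toWord = w.toWord ++ [(a, false)]) :
    Φ '' Cyl ((w * (FreeGroup.of a)⁻¹).toWord) =
      Cyl ((φ w * (FreeGroup.of b)⁻¹ * (FreeGroup.of a)⁻¹).toWord) :=
  stmt9_general a b hab φ hφa hφ Φ hΦ w hred
end

section
/- For any automorphism φ of F(A) there exists a constant M (depending only on φ and the basis A) such that for every reduced word w, the image φ(C¹_w) of the cylinder C¹_w is a union of at most M cylinders; i.e., the cardinality of the reduced set φ*_A(w) with C¹_{φ*_A(w)} = φ(C¹_w) is bounded above by a constant independent of w. -/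
open FreeGroup

variable {α : Type*}

/-!
By Cooper's bounded cancellation lemma, when `φ` is applied to a reduced product `u v`, at
most a constant number `C` of letters cancel between `φ u` and `φ v`. Hence `Φ` is equivariant for the
action of `F(A)` on `∂F(A)` by reduced concatenation: `Φ (w ζ) = φ(w) Φ(ζ)`. The cylinder
`C¹_w` is `w D`, where `D` is the set of points whose first letter does not cancel against
`w`, so `Φ(C¹_w) = φ(w) Φ(D)`. Since the boundary map of `φ⁻¹` is uniformly continuous,
`Φ(D)` is a union of cylinders `C¹_s` of a fixed length `K > C`, and translating such a
cylinder by `φ(w)` cancels fewer than `K` letters of `s`, so it gives again a single cylinder.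
Thus `Φ(C¹_w)` is a union of at most `(2|A|)^K` cylinders.
-/

namespace FreeGroup

variable {β : Type*}

theorem mk_append_mul_mk_invRev_append (P Q R : List (α × Bool)) :
    mk (P ++ Q) * mk (invRev Q ++ R) = mk (P ++ R) := by
  rw [← mul_mk, ← mul_mk, ← mul_mk, ← inv_mk]
  group

theorem apply_mk_take_inv_mul (φ : FreeGroup α ≃* FreeGroup β) (L : List (α × Bool))
    {a b : ℕ} (hab : a ≤ b) :
    (φ (mk (L.take a)))⁻¹ * φ (mk (L.take b)) = φ (mk ((L.take b).drop a)) := by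
  rw [inv_mul_eq_iff_eq_mul, ← _root_.map_mul, mul_mk]
  conv_lhs => rw [← List.take_append_drop a (L.take b), List.take_take, min_eq_left hab]

section Reduced

variable [DecidableEq α]

theorem toWord_mk_of_isReduced {L : List (α × Bool)} (hL : IsReduced L) : (mk L).toWord = L := by
  rw [toWord_mk, hL.reduce_eq]

theorem norm_mk_of_isReduced {L : List (α × Bool)} (hL : IsReduced L) :
    norm (mk L) = L.length := by
  rw [norm, toWord_mk_of_isReduced hL]

theorem exists_cancel {u v : List (α × Bool)} (hu : IsReduced u) (hv : IsReduced v) :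
    ∃ P Q R, u = P ++ Q ∧ v = invRev Q ++ R ∧ IsReduced (P ++ R) := by
  induction v generalizing u with
  | nil => exact ⟨u, [], [], by simp, by simp [invRev], by simpa using hu⟩
  | cons y v ih =>
    rcases List.eq_nil_or_concat' u with rfl | ⟨u, x, rfl⟩
    · exact ⟨[], [], y :: v, by simp, by simp [invRev], hv⟩
    by_cases hxy : y = (x.1, !x.2)
    · obtain ⟨P, Q, R, rfl, rfl, hPR⟩ :=
        ih (hu.infix (List.prefix_append u [x]).isInfix) (hv.infix (List.suffix_cons y v).isInfix)
      exact ⟨P, Q ++ [x], R, by simp, by simp [invRev, hxy], hPR⟩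
    · refine ⟨u ++ [x], [], y :: v, by simp, by simp [invRev], ?_⟩
      refine List.isChain_append.mpr ⟨hu, hv, ?_⟩
      simp only [List.getLast?_append, List.getLast?_singleton, Option.some_or, Option.mem_def,
        Option.some.injEq, List.head?_cons, forall_eq']
      intro h1
      by_contra h2
      exact hxy (Prod.ext h1.symm (Bool.eq_not_iff.mpr (Ne.symm h2)))

theorem exists_toWord_mul (g h : FreeGroup α) :
    ∃ P Q R, g.toWord = P ++ Q ∧ h.toWord = invRev Q ++ R ∧ (g * h).toWord = P ++ R := by
  obtain ⟨P, Q, R, hg, hh, hPR⟩ := exists_cancel (isReduced_toWord (x := g)) isReduced_toWord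
  refine ⟨P, Q, R, hg, hh, ?_⟩
  rw [← mk_toWord (x := g), ← mk_toWord (x := h), hg, hh, mk_append_mul_mk_invRev_append,
    toWord_mk_of_isReduced hPR]

theorem length_le_norm_mul_mk_add {L : List (α × Bool)} (hL : IsReduced L) (g : FreeGroup α) :
    L.length ≤ norm (g * mk L) + norm g := by
  calc L.length = norm (g⁻¹ * (g * mk L)) := by rw [inv_mul_cancel_left, norm_mk_of_isReduced hL]
    _ ≤ norm (g * mk L) + norm g := by
      rw [add_comm, ← norm_inv_eq (x := g)]
      exact norm_mul_le _ _

/-- The hypothesis `hgs` says that `g` does not cancel all of `s`. -/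
theorem toWord_mul_mk_append {g : FreeGroup α} {s t : List (α × Bool)} (hst : IsReduced (s ++ t))
    (hgs : norm g < norm (g * mk s) + s.length) :
    (g * mk (s ++ t)).toWord = (g * mk s).toWord ++ t := by
  have hs : IsReduced s := hst.infix ⟨[], t, by simp⟩
  obtain ⟨P, Q, R, hg, hs', hgs'⟩ := exists_toWord_mul g (mk s)
  rw [toWord_mk_of_isReduced hs] at hs'
  subst hs'
  have hR : R ≠ [] := by
    rintro rfl
    simp only [norm, hg, hgs', List.length_append, invRev_length, List.length_nil] at hgs
    omega
  have hRt : IsReduced (R ++ t) := hst.infix ⟨invRev Q, [], by simp⟩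
  rw [hgs', ← mul_mk, ← mul_assoc, ← mk_toWord (x := g * mk _), hgs', mul_mk,
    toWord_mk_of_isReduced (IsReduced.append_overlap (hgs' ▸ isReduced_toWord) hRt hR)]

theorem take_toWord_mul_mk_take {g : FreeGroup α} {x : List (α × Bool)} (hx : IsReduced x)
    {k m : ℕ} (hm : norm g + k ≤ m) :
    (g * mk (x.take m)).toWord.take k = (g * mk x).toWord.take k := by
  rcases Nat.eq_zero_or_pos k with rfl | hk
  · simp
  rcases le_or_gt x.length m with hxm | hxm
  · rw [List.take_of_length_le hxm]
  have hxt : IsReduced (x.take m) := hx.infix (List.take_prefix m x).isInfix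
  have hlen := length_le_norm_mul_mk_add hxt g
  rw [List.length_take_of_le hxm.le] at hlen
  simp only [norm] at hlen hm
  conv_rhs => rw [← List.take_append_drop m x]
  have hgm : norm g < norm (g * mk (x.take m)) + (x.take m).length := by
    rw [List.length_take_of_le hxm.le]; simp only [norm]; omega
  rw [toWord_mul_mk_append (by rwa [List.take_append_drop]) hgm,
    List.take_append_of_le_length (by omega)]

theorem norm_inv_mul_le_add (x y z : FreeGroup α) :
    norm (x⁻¹ * z) ≤ norm (x⁻¹ * y) + norm (y⁻¹ * z) := by
  simpa [mul_assoc] using norm_mul_le (x⁻¹ * y) (y⁻¹ * z)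

theorem norm_inv_mul_comm (x y : FreeGroup α) : norm (x⁻¹ * y) = norm (y⁻¹ * x) := by
  rw [← norm_inv_eq, mul_inv_rev, inv_inv]

/-- In the Cayley tree, a vertex `x` on the geodesic from `1` to `y` but not on the one from `1`
to `z` lies on the geodesic from `z` to `y`. -/
theorem norm_inv_mul_le_of_prefix {x y z : FreeGroup α} (hxy : x.toWord <+: y.toWord)
    (hxz : ¬ x.toWord <+: z.toWord) : norm (z⁻¹ * x) ≤ norm (z⁻¹ * y) := by
  obtain ⟨P, Q, R, hz, hy, hzy⟩ := exists_toWord_mul z⁻¹ y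
  have hz' : z.toWord = invRev Q ++ invRev P := by
    rw [← invRev_invRev (L₁ := z.toWord), ← toWord_inv, hz, invRev_append]
  obtain ⟨R', hx⟩ : invRev Q <+: x.toWord := by
    rcases List.prefix_or_prefix_of_prefix hxy (hy ▸ List.prefix_append _ _) with h | h
    · exact absurd (h.trans (hz' ▸ List.prefix_append _ _)) hxz
    · exact h
  have hR' : R'.length ≤ R.length := by
    rw [← hx, hy, List.prefix_append_right_inj] at hxy
    exact hxy.length_le
  calc norm (z⁻¹ * x) = norm (mk (P ++ R')) := by
        rw [← mk_toWord (x := z⁻¹), ← mk_toWord (x := x), hz, ← hx,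
          mk_append_mul_mk_invRev_append]
    _ ≤ P.length + R'.length := norm_mk_le.trans (List.length_append ..).le
    _ ≤ norm (z⁻¹ * y) := by rw [norm, hzy, List.length_append]; omega

/-- A path in the Cayley tree from `1` with jumps of length at most `L` passes within `L` of
every vertex on the geodesic from `1` to its endpoint. -/
theorem exists_norm_inv_mul_le_of_prefix {p : ℕ → FreeGroup α} {x : FreeGroup α} {n L : ℕ}
    (h0 : p 0 = 1) (hx : x.toWord <+: (p n).toWord)
    (hstep : ∀ i < n, norm ((p i)⁻¹ * p (i + 1)) ≤ L) :
    ∃ j ≤ n, norm ((p j)⁻¹ * x) ≤ L := by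
  classical
  have hex : ∃ i, x.toWord <+: (p i).toWord := ⟨n, hx⟩
  have hle : Nat.find hex ≤ n := Nat.find_min' hex hx
  have hspec := Nat.find_spec hex
  rcases hi : Nat.find hex with _ | j
  · rw [hi, h0, toWord_one, List.prefix_nil, toWord_eq_nil_iff] at hspec
    exact ⟨0, Nat.zero_le _, by simp [hspec, h0]⟩
  · refine ⟨j, by omega, ?_⟩
    calc norm ((p j)⁻¹ * x) ≤ norm ((p j)⁻¹ * p (j + 1)) :=
          norm_inv_mul_le_of_prefix (hi ▸ hspec) (Nat.find_min hex (by omega))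
      _ ≤ L := hstep j (by omega)

end Reduced

section Lipschitz

variable [DecidableEq β]

def lip [Fintype α] (φ : FreeGroup α ≃* FreeGroup β) : ℕ :=
  Finset.univ.sup (fun a => norm (φ (of a))) + 1

theorem norm_apply_mk_singleton_le [Fintype α] (φ : FreeGroup α ≃* FreeGroup β)
    (a : α × Bool) : norm (φ (mk [a])) ≤ lip φ := by
  have hof : ∀ b, norm (φ (of b)) ≤ lip φ := fun b =>
    (Finset.le_sup (f := fun a => norm (φ (of a))) (Finset.mem_univ b)).trans (Nat.le_succ _)
  obtain ⟨b, _ | _⟩ := a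
  · have hinv : mk [(b, false)] = (of b)⁻¹ := by rw [of, inv_mk]; rfl
    rw [hinv, _root_.map_inv, norm_inv_eq]
    exact hof b
  · exact hof b

theorem norm_apply_mk_le [Fintype α] (φ : FreeGroup α ≃* FreeGroup β)
    (L : List (α × Bool)) : norm (φ (mk L)) ≤ lip φ * L.length := by
  induction L with
  | nil => simp [← one_eq_mk]
  | cons a L ih =>
    rw [show a :: L = [a] ++ L from rfl, ← mul_mk, _root_.map_mul, List.length_append,
      List.length_singleton, mul_add, mul_one]
    exact (norm_mul_le _ _).trans (add_le_add (norm_apply_mk_singleton_le φ a) ih)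

theorem norm_apply_mk_take_inv_mul_le [Fintype α] (φ : FreeGroup α ≃* FreeGroup β)
    (L : List (α × Bool)) {a b : ℕ} (hab : a ≤ b) :
    norm ((φ (mk (L.take a)))⁻¹ * φ (mk (L.take b))) ≤ lip φ * (b - a) := by
  rw [apply_mk_take_inv_mul φ L hab]
  refine (norm_apply_mk_le φ _).trans (Nat.mul_le_mul_left _ ?_)
  simp only [List.length_drop, List.length_take]
  omega

variable [DecidableEq α]

theorem length_le_lip_symm_mul_norm [Fintype β] (φ : FreeGroup α ≃* FreeGroup β)
    {L : List (α × Bool)} (hL : IsReduced L) : L.length ≤ lip φ.symm * norm (φ (mk L)) := by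
  have h := norm_apply_mk_le φ.symm (φ (mk L)).toWord
  rwa [mk_toWord, MulEquiv.symm_apply_apply, norm_mk_of_isReduced hL] at h

theorem le_norm_apply_mk [Fintype β] (φ : FreeGroup α ≃* FreeGroup β) {L : List (α × Bool)}
    (hL : IsReduced L) {j : ℕ} (hj : lip φ.symm * j ≤ L.length) : j ≤ norm (φ (mk L)) :=
  Nat.le_of_mul_le_mul_left (hj.trans (length_le_lip_symm_mul_norm φ hL)) (Nat.succ_pos _)

theorem sub_le_lip_symm_mul_norm_apply_mk_take_inv_mul [Fintype β]
    (φ : FreeGroup α ≃* FreeGroup β) {L : List (α × Bool)} (hL : IsReduced L) {a b : ℕ}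
    (hab : a ≤ b) (hb : b ≤ L.length) :
    b - a ≤ lip φ.symm * norm ((φ (mk (L.take a)))⁻¹ * φ (mk (L.take b))) := by
  rw [apply_mk_take_inv_mul φ L hab]
  have hred : IsReduced ((L.take b).drop a) :=
    hL.infix (((L.take b).drop_suffix a).isInfix.trans (L.take_prefix b).isInfix)
  simpa [min_eq_left hb] using length_le_lip_symm_mul_norm φ hred

def bcc [Fintype α] [Fintype β] (φ : FreeGroup α ≃* FreeGroup β) : ℕ :=
  lip φ * (1 + 2 * lip φ * lip φ.symm)

/-- **Bounded cancellation lemma** (Cooper). -/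
theorem length_le_bcc [Fintype α] [Fintype β] (φ : FreeGroup α ≃* FreeGroup β)
    {l₁ l₂ : List (α × Bool)} (hl : IsReduced (l₁ ++ l₂)) {P Q R : List (β × Bool)}
    (h₁ : (φ (mk l₁)).toWord = P ++ Q) (h₂ : (φ (mk l₂)).toWord = invRev Q ++ R) :
    Q.length ≤ bcc φ := by
  set L := l₁ ++ l₂
  set n := l₁.length
  have hnL : n ≤ L.length := by simp [L, n]
  set p : ℕ → FreeGroup β := fun i => φ (mk (L.take i)) with hp
  have hup : ∀ a b, a ≤ b → norm ((p a)⁻¹ * p b) ≤ lip φ * (b - a) :=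
    fun a b => norm_apply_mk_take_inv_mul_le φ L
  have hlow : ∀ a b, a ≤ b → b ≤ L.length → b - a ≤ lip φ.symm * norm ((p a)⁻¹ * p b) :=
    fun a b => sub_le_lip_symm_mul_norm_apply_mk_take_inv_mul φ hl
  have hstep : ∀ i, norm ((p i)⁻¹ * p (i + 1)) ≤ lip φ := fun i => by
    simpa using hup i (i + 1) (Nat.le_succ i)
  have hn : p n = φ (mk l₁) := by simp [hp, n, L]
  have hN : (p n)⁻¹ * p (n + (L.length - n)) = φ (mk l₂) := by
    rw [Nat.add_sub_cancel' hnL, hn, hp]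
    simp only [List.take_length, L, ← mul_mk, _root_.map_mul, inv_mul_cancel_left]
  have hPQ : mk P * mk Q = φ (mk l₁) := by rw [mul_mk, ← h₁, mk_toWord]
  have hP : (mk P).toWord = P :=
    toWord_mk_of_isReduced ((h₁ ▸ isReduced_toWord).infix (List.prefix_append P Q).isInfix)
  have hQ : (mk (invRev Q)).toWord = invRev Q :=
    toWord_mk_of_isReduced ((h₂ ▸ isReduced_toWord).infix (List.prefix_append _ R).isInfix)
  have hQlen : Q.length = norm ((mk P)⁻¹ * p n) := by
    rw [hn, ← hPQ, inv_mul_cancel_left, ← norm_inv_eq, inv_mk, norm, hQ, invRev_length]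
  -- the image path passes near the vertex `mk P` both before and after time `n`
  obtain ⟨j, hj, hjP⟩ := exists_norm_inv_mul_le_of_prefix (p := p) (x := mk P) (n := n)
    (by simp [hp, ← one_eq_mk]) (by rw [hP, hn, h₁]; exact List.prefix_append P Q)
    (fun i _ => hstep i)
  have hx : (p n)⁻¹ * mk P = mk (invRev Q) := by
    rw [hn, ← hPQ, mul_inv_rev, inv_mul_cancel_right, inv_mk]
  obtain ⟨i, hi, hiP⟩ := exists_norm_inv_mul_le_of_prefix
    (p := fun i => (p n)⁻¹ * p (n + i)) (x := (p n)⁻¹ * mk P) (n := L.length - n)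
    (by simp) (by rw [hx, hQ, hN, h₂]; exact List.prefix_append _ R)
    (fun i _ => by simpa [mul_assoc, add_assoc] using hstep (n + i))
  simp only [mul_inv_rev, inv_inv, mul_assoc, mul_inv_cancel_left] at hiP
  have hnj : Q.length ≤ lip φ + lip φ * (n - j) :=
    hQlen ▸ (norm_inv_mul_le_add _ (p j) _).trans
      (add_le_add (norm_inv_mul_comm (mk P) _ ▸ hjP) (hup j n hj))
  have hji : n - j ≤ lip φ.symm * (2 * lip φ) :=
    calc n - j ≤ n + i - j := by omega
      _ ≤ lip φ.symm * norm ((p j)⁻¹ * p (n + i)) := hlow j (n + i) (by omega) (by omega)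
      _ ≤ lip φ.symm * (2 * lip φ) := Nat.mul_le_mul_left _ <|
        (norm_inv_mul_le_add _ (mk P) _).trans (by rw [norm_inv_mul_comm (mk P)]; omega)
  calc Q.length ≤ lip φ + lip φ * (lip φ.symm * (2 * lip φ)) := by
        have := Nat.mul_le_mul_left (lip φ) hji; omega
    _ = bcc φ := by unfold bcc; ring

theorem norm_apply_add_norm_apply_le [Fintype α] [Fintype β] (φ : FreeGroup α ≃* FreeGroup β)
    {l₁ l₂ : List (α × Bool)} (hl : IsReduced (l₁ ++ l₂)) :
    norm (φ (mk l₁)) + norm (φ (mk l₂)) ≤ norm (φ (mk (l₁ ++ l₂))) + 2 * bcc φ := by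
  obtain ⟨P, Q, R, h₁, h₂, h⟩ := exists_toWord_mul (φ (mk l₁)) (φ (mk l₂))
  have hQ := length_le_bcc φ hl h₁ h₂
  rw [← mul_mk, _root_.map_mul]
  simp only [norm, h₁, h₂, h, List.length_append, invRev_length]
  omega

theorem take_toWord_apply_mk_take [Fintype α] [Fintype β] (φ : FreeGroup α ≃* FreeGroup β)
    {x : List (α × Bool)} (hx : IsReduced x) {k m : ℕ} (hm : lip φ.symm * (k + bcc φ) ≤ m) :
    (φ (mk (x.take m))).toWord.take k = (φ (mk x)).toWord.take k := by
  rcases le_or_gt x.length m with hxm | hxm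
  · rw [List.take_of_length_le hxm]
  have hlong : k + bcc φ ≤ norm (φ (mk (x.take m))) :=
    le_norm_apply_mk φ (hx.infix (List.take_prefix m x).isInfix)
      (by rw [List.length_take_of_le hxm.le]; exact hm)
  obtain ⟨P, Q, R, h₁, h₂, h⟩ := exists_toWord_mul (φ (mk (x.take m))) (φ (mk (x.drop m)))
  have hQ := length_le_bcc φ (by rwa [List.take_append_drop]) h₁ h₂
  rw [← _root_.map_mul, mul_mk, List.take_append_drop] at h
  rw [h₁, h, List.take_append_of_le_length, List.take_append_of_le_length] <;>
  · simp only [norm, h₁, List.length_append] at hlong; omega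

end Lipschitz

end FreeGroup

theorem ne_linv_iff_s13 (a b : α × Bool) : b ≠ linv a ↔ (a.1 = b.1 → a.2 = b.2) := by
  obtain ⟨a₁, a₂⟩ := a
  obtain ⟨b₁, b₂⟩ := b
  cases a₂ <;> cases b₂ <;> simp [linv, eq_comm]

namespace Bd

@[simp]
theorem length_pre (ξ : Bd α) (m : ℕ) : (pre ξ m).length = m := List.length_ofFn

theorem getElem_pre (ξ : Bd α) {i m : ℕ} (h : i < (pre ξ m).length) : (pre ξ m)[i] = ξ.1 i :=
  List.getElem_ofFn h

theorem getElem?_pre (ξ : Bd α) {i m : ℕ} (h : i < m) : (pre ξ m)[i]? = some (ξ.1 i) := by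
  simp [pre, h]

theorem take_pre (ξ : Bd α) {k m : ℕ} (h : k ≤ m) : (pre ξ m).take k = pre ξ k := by
  refine List.ext_getElem? fun i => ?_
  rw [List.getElem?_take]
  split_ifs with hi
  · rw [getElem?_pre ξ hi, getElem?_pre ξ (by omega)]
  · exact (List.getElem?_eq_none (by simp; omega)).symm

theorem pre_succ (ξ : Bd α) (m : ℕ) : pre ξ (m + 1) = pre ξ m ++ [ξ.1 m] := by
  simp only [pre, List.ofFn_succ', List.concat_eq_append, Fin.val_castSucc, Fin.val_last]

theorem isReduced_pre (ξ : Bd α) (m : ℕ) : IsReduced (pre ξ m) :=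
  List.isChain_iff_getElem.2 fun i hi => by simpa [pre, ne_linv_iff_s13] using ξ.2 i

theorem ext_pre {ξ η : Bd α} (h : ∀ k, pre ξ k = pre η k) : ξ = η := by
  refine Subtype.ext (funext fun i => ?_)
  have := congrArg (·[i]?) (h (i + 1))
  rwa [getElem?_pre _ (Nat.lt_succ_self i), getElem?_pre _ (Nat.lt_succ_self i),
    Option.some_inj] at this

theorem mem_cyl_iff {ξ : Bd α} {u : List (α × Bool)} :
    ξ ∈ Cyl u ↔ pre ξ u.length = u := by
  refine ⟨fun h => List.ext_getElem (length_pre ξ _) fun i hi _ => ?_, fun h i hi => ?_⟩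
  · rw [getElem_pre]
    exact h i (by simpa using hi)
  · have hi' : i < (pre ξ u.length).length := by simpa using hi
    simp only [List.get_eq_getElem, ← getElem_pre ξ hi']
    exact List.getElem_of_eq h hi'

theorem mem_cyl_pre (ξ : Bd α) (m : ℕ) : ξ ∈ Cyl (pre ξ m) :=
  mem_cyl_iff.2 (by rw [length_pre])

def TendsTo (x : ℕ → List (α × Bool)) (ξ : Bd α) : Prop :=
  ∀ k, ∀ᶠ m in Filter.atTop, (x m).take k = pre ξ k

theorem tendsTo_pre (ξ : Bd α) : TendsTo (pre ξ) ξ :=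
  fun k => Filter.eventually_atTop.2 ⟨k, fun _ hm => take_pre ξ hm⟩

theorem TendsTo.unique {x : ℕ → List (α × Bool)} {ξ η : Bd α} (hξ : TendsTo x ξ)
    (hη : TendsTo x η) : ξ = η :=
  ext_pre fun k => by
    obtain ⟨m, hmξ, hmη⟩ := ((hξ k).and (hη k)).exists
    rw [← hmξ, hmη]

theorem exists_tendsTo {x : ℕ → List (α × Bool)} (hx : ∀ m, IsReduced (x m))
    (hstab : ∀ k, ∃ n, k ≤ (x n).length ∧ ∀ m ≥ n, (x m).take k = (x n).take k) :
    ∃ ξ, TendsTo x ξ := by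
  choose N hlen hN using hstab
  let a : ℕ → α × Bool := fun i => (x (N (i + 1)))[i]'(by have := hlen (i + 1); omega)
  have ha : ∀ i m, N (i + 1) ≤ m → (x m)[i]? = some (a i) := fun i m hm => by
    have := congrArg (·[i]?) (hN (i + 1) m hm)
    simp only [List.getElem?_take, if_pos (Nat.lt_succ_self i)] at this
    rw [this, List.getElem?_eq_getElem]
  have hred : ∀ i, a (i + 1) ≠ linv (a i) := fun i => by
    set m := max (N (i + 1)) (N (i + 2))
    obtain ⟨hi, h₁⟩ := List.getElem?_eq_some_iff.1 (ha i m (le_max_left _ _))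
    obtain ⟨hi', h₂⟩ := List.getElem?_eq_some_iff.1 (ha (i + 1) m (le_max_right _ _))
    rw [← h₁, ← h₂, ne_linv_iff_s13]
    exact List.isChain_iff_getElem.1 (hx _) i hi'
  refine ⟨⟨a, hred⟩, fun k => ?_⟩
  filter_upwards [(Filter.eventually_all_finite (Set.finite_Iio k)).2
    fun i _ => Filter.eventually_ge_atTop (N (i + 1))] with m hm
  show _ = List.ofFn fun i : Fin k => a i
  refine List.ext_getElem? fun i => ?_
  rw [List.getElem?_take, List.getElem?_ofFn]
  split_ifs with hi
  · exact ha i m (hm i hi)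
  · rfl

theorem isReduced_append_pre {u : List (α × Bool)} {ξ : Bd α} (h : IsReduced (u ++ [ξ.1 0]))
    (m : ℕ) : IsReduced (u ++ pre ξ m) := by
  rcases m with _ | m
  · simpa [pre] using h.infix (List.prefix_append u _).isInfix
  · have hpre : pre ξ (m + 1) = [ξ.1 0] ++ (pre ξ (m + 1)).tail := by
      simp [pre, List.ofFn_succ]
    rw [hpre, ← List.append_assoc]
    exact h.append_overlap (hpre ▸ isReduced_pre ξ (m + 1)) (List.cons_ne_nil _ _)

variable [DecidableEq α]

theorem exists_tendsTo_mul (g : FreeGroup α) (θ : Bd α) :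
    ∃ η, TendsTo (fun m => (g * mk (pre θ m)).toWord) η := by
  refine exists_tendsTo (fun _ => isReduced_toWord) fun k => ⟨g.norm + k, ?_, fun m hm => ?_⟩
  · have := length_le_norm_mul_mk_add (isReduced_pre θ (g.norm + k)) g
    simp only [length_pre, FreeGroup.norm] at this ⊢
    omega
  · rw [← take_toWord_mul_mk_take (isReduced_pre θ m) le_rfl, take_pre θ hm]

/-- Left translation of boundary points: `g • θ` is the limit of the reduced words `g θ|m`. -/
noncomputable instance : SMul (FreeGroup α) (Bd α) :=
  ⟨fun g θ => (exists_tendsTo_mul g θ).choose⟩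

theorem tendsTo_smul (g : FreeGroup α) (θ : Bd α) :
    TendsTo (fun m => (g * mk (pre θ m)).toWord) (g • θ) :=
  (exists_tendsTo_mul g θ).choose_spec

theorem TendsTo.mul_left {x : ℕ → List (α × Bool)} {θ : Bd α} (hx : TendsTo x θ)
    (hred : ∀ m, IsReduced (x m)) (g : FreeGroup α) :
    TendsTo (fun m => (g * mk (x m)).toWord) (g • θ) := fun k => by
  obtain ⟨n, hn, hgn⟩ :=
    ((tendsTo_smul g θ k).and (Filter.eventually_ge_atTop (g.norm + k))).exists
  filter_upwards [hx n] with m hm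
  rw [← take_toWord_mul_mk_take (hred m) hgn, hm, hn]

noncomputable instance : MulAction (FreeGroup α) (Bd α) where
  one_smul θ := by
    refine (tendsTo_smul 1 θ).unique ?_
    simpa [toWord_mk_of_isReduced (isReduced_pre θ _)] using tendsTo_pre θ
  mul_smul g h θ := by
    refine (tendsTo_smul (g * h) θ).unique ?_
    simpa [mul_assoc, mk_toWord] using (tendsTo_smul h θ).mul_left (fun _ => isReduced_toWord) g

theorem smul_mem_cyl {g : FreeGroup α} {s : List (α × Bool)}
    (hgs : g.norm < (g * mk s).norm + s.length) {θ : Bd α} (hθ : θ ∈ Cyl s) :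
    g • θ ∈ Cyl (g * mk s).toWord := by
  obtain ⟨m, hm, hsm⟩ :=
    ((tendsTo_smul g θ (g * mk s).toWord.length).and (Filter.eventually_ge_atTop s.length)).exists
  simp only at hm
  have hsplit : pre θ m = s ++ (pre θ m).drop s.length := by
    conv_lhs => rw [← List.take_append_drop s.length (pre θ m)]
    rw [take_pre θ hsm, mem_cyl_iff.1 hθ]
  rw [mem_cyl_iff, ← hm, hsplit,
    toWord_mul_mk_append (hsplit ▸ isReduced_pre θ m) hgs, List.take_left]

theorem image_smul_cyl {g : FreeGroup α} {s : List (α × Bool)} (hs : IsReduced s)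
    (hgs : g.norm < (g * mk s).norm + s.length) :
    (g • ·) '' Cyl s = Cyl (g * mk s).toWord := by
  refine Set.Subset.antisymm (Set.image_subset_iff.2 fun θ => smul_mem_cyl hgs) fun η hη => ?_
  have hg : g⁻¹ * mk (g * mk s).toWord = mk s := by rw [mk_toWord, inv_mul_cancel_left]
  refine ⟨g⁻¹ • η, ?_, smul_inv_smul g η⟩
  have := smul_mem_cyl (g := g⁻¹)
    (by rwa [hg, norm_inv_eq, norm_mk_of_isReduced hs, add_comm, ← FreeGroup.norm]) hη
  rwa [hg, toWord_mk_of_isReduced hs] at this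

theorem image_smul_setOf_isReduced (w : FreeGroup α) :
    (w • ·) '' {ζ : Bd α | IsReduced (w.toWord ++ [ζ.1 0])} = Cyl w.toWord := by
  have hcyl : ∀ {a : α × Bool}, IsReduced (w.toWord ++ [a]) →
      (w * mk [a]).toWord = w.toWord ++ [a] ∧ w.norm < (w * mk [a]).norm + 1 := fun {a} ha => by
    have h : (w * mk [a]).toWord = w.toWord ++ [a] := by
      rw [← mk_toWord (x := w), mul_mk, toWord_mk_of_isReduced ha, mk_toWord]
    refine ⟨h, ?_⟩
    simp only [FreeGroup.norm, h, List.length_append, List.length_singleton]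
    omega
  refine Set.Subset.antisymm (Set.image_subset_iff.2 fun ζ hζ => ?_) fun ξ hξ => ?_
  · obtain ⟨h, hlt⟩ := hcyl hζ
    have := smul_mem_cyl (g := w) (s := [ζ.1 0]) hlt (mem_cyl_pre ζ 1)
    rw [h, mem_cyl_iff, List.length_append, List.length_singleton] at this
    rw [Set.mem_preimage, mem_cyl_iff, ← take_pre _ (Nat.le_add_right _ 1), this, List.take_left]
  · set l := w.toWord
    set b := ξ.1 l.length
    have hpre : pre ξ (l.length + 1) = l ++ [b] := by rw [pre_succ, mem_cyl_iff.1 hξ]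
    have hw : w⁻¹ * mk (l ++ [b]) = mk [b] := by rw [← mul_mk, mk_toWord, inv_mul_cancel_left]
    have hlt : w⁻¹.norm < (w⁻¹ * mk (l ++ [b])).norm + (l ++ [b]).length := by
      rw [hw, norm_inv_eq, norm_mk_of_isReduced IsReduced.singleton]
      simp only [l, FreeGroup.norm, List.length_append, List.length_singleton]
      omega
    have hζ := smul_mem_cyl hlt
      (mem_cyl_iff.2 (by rw [List.length_append, List.length_singleton, hpre]))
    rw [hw, toWord_mk_of_isReduced IsReduced.singleton, mem_cyl_iff] at hζ
    refine ⟨w⁻¹ • ξ, ?_, smul_inv_smul w ξ⟩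
    have h0 : (w⁻¹ • ξ).1 0 = b := by simpa [pre] using hζ
    show IsReduced (l ++ [(w⁻¹ • ξ).1 0])
    rw [h0, ← hpre]
    exact isReduced_pre ξ _

end Bd

theorem exists_finset_biUnion_pre [Fintype α] {γ : Type*} (T : Set (Bd α)) (K : ℕ)
    (F : List (α × Bool) → Set γ) :
    ∃ S : Finset (List (α × Bool)), S.card ≤ Fintype.card (α × Bool) ^ K ∧
      ⋃ θ ∈ T, F (pre θ K) = ⋃ s ∈ S, F s := by
  classical
  set S := Finset.univ.filter fun f : Fin K → α × Bool => ∃ θ ∈ T, pre θ K = List.ofFn f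
  refine ⟨S.image List.ofFn, ?_, ?_⟩
  · calc _ ≤ _ := Finset.card_image_le
      _ ≤ _ := Finset.card_filter_le _ _
      _ = _ := by simp [Finset.card_univ]
  · rw [Finset.set_biUnion_finset_image]
    ext x
    simp only [S, Set.mem_iUnion, Finset.mem_filter, Finset.mem_univ, true_and, exists_prop]
    constructor
    · rintro ⟨θ, hθ, hx⟩
      exact ⟨fun i => θ.1 i, ⟨θ, hθ, rfl⟩, hx⟩
    · rintro ⟨f, ⟨θ, hθ, hf⟩, hx⟩
      exact ⟨θ, hθ, hf ▸ hx⟩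

section BoundaryExtension

variable [DecidableEq α] {φ : FreeGroup α ≃* FreeGroup α} {Φ Ψ : Bd α → Bd α}

theorem extendsBd_iff :
    ExtendsBd φ Φ ↔ ∀ ξ, Bd.TendsTo (fun m => (φ (mk (pre ξ m))).toWord) (Φ ξ) := by
  simp only [ExtendsBd, Bd.TendsTo, Filter.eventually_atTop]
  rfl

variable [Fintype α]

theorem exists_extendsBd (φ : FreeGroup α ≃* FreeGroup α) : ∃ Φ, ExtendsBd φ Φ := by
  have h : ∀ ξ : Bd α, ∃ η, Bd.TendsTo (fun m => (φ (mk (pre ξ m))).toWord) η := fun ξ =>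
    Bd.exists_tendsTo (fun _ => isReduced_toWord) fun k =>
      ⟨lip φ.symm * (k + bcc φ), (Nat.le_add_right _ _).trans <|
        le_norm_apply_mk φ (Bd.isReduced_pre ξ _) (Bd.length_pre ξ _).symm.le,
        fun m hm => by
          rw [← take_toWord_apply_mk_take φ (Bd.isReduced_pre ξ m) le_rfl, Bd.take_pre ξ hm]⟩
  choose Φ hΦ using h
  exact ⟨Φ, extendsBd_iff.2 hΦ⟩

namespace ExtendsBd

theorem pre_apply (hΦ : ExtendsBd φ Φ) (ξ : Bd α) (k : ℕ) :
    pre (Φ ξ) k = (φ (mk (pre ξ (lip φ.symm * (k + bcc φ))))).toWord.take k := by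
  obtain ⟨m, hm, hMm⟩ := ((extendsBd_iff.1 hΦ ξ k).and
    (Filter.eventually_ge_atTop (lip φ.symm * (k + bcc φ)))).exists
  rw [← hm, ← take_toWord_apply_mk_take φ (Bd.isReduced_pre ξ m) le_rfl, Bd.take_pre ξ hMm]

theorem tendsTo (hΦ : ExtendsBd φ Φ) {x : ℕ → List (α × Bool)} {ξ : Bd α}
    (hx : Bd.TendsTo x ξ) (hred : ∀ m, IsReduced (x m)) :
    Bd.TendsTo (fun m => (φ (mk (x m))).toWord) (Φ ξ) :=
  fun k => by
    filter_upwards [hx (lip φ.symm * (k + bcc φ))] with m hm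
    rw [hΦ.pre_apply, ← hm, take_toWord_apply_mk_take φ (hred m) le_rfl]

theorem leftInverse (hΦ : ExtendsBd φ Φ) (hΨ : ExtendsBd φ.symm Ψ) :
    Function.LeftInverse Ψ Φ := fun ξ => by
  have h := hΨ.tendsTo (extendsBd_iff.1 hΦ ξ) fun _ => isReduced_toWord
  simp only [mk_toWord, MulEquiv.symm_apply_apply,
    toWord_mk_of_isReduced (Bd.isReduced_pre ξ _)] at h
  exact h.unique (Bd.tendsTo_pre ξ)

theorem map_smul (hΦ : ExtendsBd φ Φ) (w : FreeGroup α) (ζ : Bd α) :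
    Φ (w • ζ) = φ w • Φ ζ := by
  refine (hΦ.tendsTo (Bd.tendsTo_smul w ζ) fun _ => isReduced_toWord).unique ?_
  simpa [mk_toWord] using (extendsBd_iff.1 hΦ ζ).mul_left (fun _ => isReduced_toWord) (φ w)

/-- The first letter of `Ψ θ` only depends on a bounded prefix of `θ`. -/
theorem biUnion_cyl_pre_image (hΦ : ExtendsBd φ Φ) (hΨ : ExtendsBd φ.symm Ψ)
    (p : α × Bool → Prop) {K : ℕ} (hK : lip φ * (1 + bcc φ.symm) ≤ K) :
    ⋃ θ ∈ Φ '' {ζ | p (ζ.1 0)}, Cyl (pre θ K) = Φ '' {ζ | p (ζ.1 0)} := by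
  refine Set.Subset.antisymm (Set.iUnion₂_subset ?_)
    fun θ hθ => Set.mem_biUnion hθ (Bd.mem_cyl_pre θ K)
  rintro _ ⟨ζ, hζ, rfl⟩ θ hθ
  rw [Bd.mem_cyl_iff, Bd.length_pre] at hθ
  refine ⟨Ψ θ, ?_, hΨ.leftInverse hΦ θ⟩
  have hpre : pre (Ψ θ) 1 = pre ζ 1 := by
    rw [← hΦ.leftInverse hΨ ζ, hΨ.pre_apply, hΨ.pre_apply, MulEquiv.symm_symm,
      ← Bd.take_pre θ hK, hθ, Bd.take_pre _ hK]
  have h0 := congrArg (·[0]?) hpre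
  simp only [Bd.getElem?_pre _ Nat.one_pos, Option.some_inj] at h0
  show p ((Ψ θ).1 0)
  rwa [h0]

theorem image_cyl_toWord (hΦ : ExtendsBd φ Φ) (w : FreeGroup α) :
    Φ '' Cyl w.toWord = (φ w • ·) '' (Φ '' {ζ | IsReduced (w.toWord ++ [ζ.1 0])}) := by
  rw [← Bd.image_smul_setOf_isReduced, Set.image_image, Set.image_image]
  simp_rw [hΦ.map_smul]

theorem norm_lt_norm_mul_pre_add (hΦ : ExtendsBd φ Φ) {w : FreeGroup α} {ζ : Bd α}
    (hζ : IsReduced (w.toWord ++ [ζ.1 0])) {K : ℕ} (hK : bcc φ < K) :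
    (φ w).norm < (φ w * mk (pre (Φ ζ) K)).norm + K := by
  obtain ⟨M, hM⟩ : ∃ M, M = lip φ.symm * (K + bcc φ) := ⟨_, rfl⟩
  obtain ⟨y, hy⟩ : ∃ y, y = (φ (mk (pre ζ M))).toWord := ⟨_, rfl⟩
  have hlen : K + bcc φ ≤ y.length :=
    hy ▸ le_norm_apply_mk φ (Bd.isReduced_pre ζ M) (by rw [Bd.length_pre, hM])
  have hbcc := norm_apply_add_norm_apply_le φ (Bd.isReduced_append_pre hζ M)
  rw [← mul_mk, _root_.map_mul, mk_toWord] at hbcc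
  have hsplit : φ (mk (pre ζ M)) = mk (y.take K) * mk (y.drop K) := by
    rw [mul_mk, List.take_append_drop, hy, mk_toWord]
  have htri :
      (φ w * φ (mk (pre ζ M))).norm ≤ (φ w * mk (y.take K)).norm + (y.length - K) := by
    rw [hsplit, ← mul_assoc]
    exact (FreeGroup.norm_mul_le _ _).trans
      (Nat.add_le_add_left (norm_mk_le.trans (List.length_drop ..).le) _)
  rw [hΦ.pre_apply, ← hM, ← hy]
  simp only [FreeGroup.norm] at hbcc htri ⊢
  rw [← hy] at hbcc
  omega

theorem image_smul_cyl_pre (hΦ : ExtendsBd φ Φ) {w : FreeGroup α} {K : ℕ} (hK : bcc φ < K)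
    {θ : Bd α} (hθ : θ ∈ Φ '' {ζ | IsReduced (w.toWord ++ [ζ.1 0])}) :
    (φ w • ·) '' Cyl (pre θ K) = Cyl (φ w * mk (pre θ K)).toWord := by
  obtain ⟨ζ, hζ, rfl⟩ := hθ
  refine Bd.image_smul_cyl (Bd.isReduced_pre _ K) ?_
  rw [Bd.length_pre]
  exact hΦ.norm_lt_norm_mul_pre_add hζ hK

end ExtendsBd

end BoundaryExtension

theorem stmt13_general [DecidableEq α] [Fintype α]
    (φ : FreeGroup α ≃* FreeGroup α) (Φ : Bd α → Bd α) (hΦ : ExtendsBd φ Φ) :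
    ∃ M : ℕ, ∀ w : FreeGroup α, ∃ U : Finset (FreeGroup α), U.card ≤ M ∧
      Φ '' Cyl w.toWord = ⋃ u ∈ U, Cyl u.toWord := by
  obtain ⟨Ψ, hΨ⟩ := exists_extendsBd φ.symm
  obtain ⟨K, hK⟩ : ∃ K, K = max (bcc φ + 1) (lip φ * (1 + bcc φ.symm)) := ⟨_, rfl⟩
  refine ⟨Fintype.card (α × Bool) ^ K, fun w => ?_⟩
  set T := Φ '' {ζ | IsReduced (w.toWord ++ [ζ.1 0])}
  obtain ⟨S, hS, hST⟩ := exists_finset_biUnion_pre T K fun s => Cyl (φ w * mk s).toWord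
  refine ⟨S.image (φ w * mk ·), Finset.card_image_le.trans hS, ?_⟩
  calc Φ '' Cyl w.toWord = (φ w • ·) '' ⋃ θ ∈ T, Cyl (pre θ K) := by
        rw [hΦ.image_cyl_toWord, hΦ.biUnion_cyl_pre_image hΨ
          (fun a => IsReduced (w.toWord ++ [a])) (hK ▸ le_max_right _ _)]
    _ = ⋃ θ ∈ T, Cyl (φ w * mk (pre θ K)).toWord := by
        rw [Set.image_iUnion₂]
        exact Set.iUnion₂_congr fun θ hθ =>
          hΦ.image_smul_cyl_pre (hK ▸ Nat.lt_of_succ_le (le_max_left _ _)) hθ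
    _ = ⋃ u ∈ S.image (φ w * mk ·), Cyl u.toWord := by
        rw [hST, Finset.set_biUnion_finset_image]

/-- For any automorphism `φ` there is a bound `M` such that the image of every cylinder
is a union of at most `M` cylinders. -/
theorem stmt13 [DecidableEq α] [Fintype α] [Nontrivial α]
    (φ : FreeGroup α ≃* FreeGroup α) (Φ : Bd α → Bd α) (hΦ : ExtendsBd φ Φ) :
    ∃ M : ℕ, ∀ w : FreeGroup α, ∃ U : Finset (FreeGroup α), U.card ≤ M ∧
      Φ '' Cyl w.toWord = ⋃ u ∈ U, Cyl u.toWord :=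
  stmt13_general φ Φ hΦ
end
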